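/- Let R be a left n-𝒳-coherent ring, n ≥ 1 an integer, and 𝒳 a class of left R-modules. If {A_i}_{i∈I} is a family of left R-modules, then the direct sum ⊕_{i∈I} A_i is n-𝒳-injective if and only if every A_i is n-𝒳-injective. -/

import Mathlib

/- Common framework: `n`-presented modules, syzygies, special 𝒳-presented modules,
   Ext/Tor vanishing (Tor via a hand-rolled tensor product over a possibly
   noncommutative ring, since Mathlib's tensor product requires commutativity),
   `n`-𝒳-injective / `n`-𝒳-flat modules, and the Gorenstein versions. -/

universe u
open CategoryTheory LinearMap DirectSum

section Basic

variable (R : Type u) [Ring R]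

/-- `U` is an `n`-presented left `R`-module: there is an exact sequence
`F_n → ⋯ → F_0 → U → 0` with each `F_i` finitely generated free. -/
def IsNPresented : ℕ → ModuleCat.{u} R → Prop
  | 0, U => Module.Finite R U
  | n + 1, U => ∃ (F : ModuleCat.{u} R) (f : F →ₗ[R] U),
      Module.Free R F ∧ Module.Finite R F ∧ Function.Surjective f ∧
      IsNPresented n (ModuleCat.of R (LinearMap.ker f))

/-- `K` is a `j`-th syzygy of `U` computed from finitely generated free modules:
`IsSyzygy 0 U K` iff `K ≅ U`, and a `(j+1)`-st syzygy of `U` is a `j`-th syzygy of the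
kernel of a surjection from a finitely generated free module onto `U`. -/
def IsSyzygy : ℕ → ModuleCat.{u} R → ModuleCat.{u} R → Prop
  | 0, U, K => Nonempty (K ≃ₗ[R] U)
  | j + 1, U, K => ∃ (F : ModuleCat.{u} R) (f : F →ₗ[R] U),
      Module.Free R F ∧ Module.Finite R F ∧ Function.Surjective f ∧
      IsSyzygy j (ModuleCat.of R (LinearMap.ker f)) K

/-- `Ext_R^k(U, M) = 0`. -/
noncomputable def ExtVanishes (k : ℕ) (U M : ModuleCat.{u} R) : Prop :=
  Subsingleton (((Ext ℤ (ModuleCat.{u} R) k).obj (Opposite.op U)).obj M)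

variable (𝒳 : Set (ModuleCat.{u} R)) (n : ℕ)

/-- `K` is a special 𝒳-presented module: `K` is the image `K_{n-1} = Im(F_{n-1} → F_{n-2})`
arising from an `n`-presentation of some `U ∈ 𝒳` (with the convention `K = U` when `n = 1`),
i.e. `K` is an `(n-1)`-st syzygy of some `n`-presented `U ∈ 𝒳`. -/
def IsSpecialPresented (K : ModuleCat.{u} R) : Prop :=
  ∃ U ∈ 𝒳, IsNPresented R n U ∧ IsSyzygy R (n - 1) U K

/-- `M` is an `n`-𝒳-injective left `R`-module: `Ext_R^n(U, M) = 0` for every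
`n`-presented `U ∈ 𝒳`. -/
noncomputable def IsNXInjective (M : ModuleCat.{u} R) : Prop :=
  ∀ U ∈ 𝒳, IsNPresented R n U → ExtVanishes R n U M

/-- Projective dimension at most `m`. -/
def ProjDimLE : ℕ → ModuleCat.{u} R → Prop
  | 0, K => Module.Projective R K
  | m + 1, K => ∃ (P : ModuleCat.{u} R) (f : P →ₗ[R] K),
      Module.Projective R P ∧ Function.Surjective f ∧
      ProjDimLE m (ModuleCat.of R (LinearMap.ker f))

/-- Finite projective dimension. -/
def HasFiniteProjDim (K : ModuleCat.{u} R) : Prop := ∃ m, ProjDimLE R m K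

/-- `R` is left `n`-𝒳-coherent: every `n`-presented module in `𝒳` is `(n+1)`-presented. -/
def IsNXCoherent : Prop := ∀ U ∈ 𝒳, IsNPresented R n U → IsNPresented R (n + 1) U

/-- `M` has `n`-𝒳-injective dimension at most `m`:
`Ext_R^{n+i}(U, M) = 0` for all `i ≥ m + 1` and all `n`-presented `U ∈ 𝒳`. -/
noncomputable def NXInjDimLE (m : ℕ) (M : ModuleCat.{u} R) : Prop :=
  ∀ U ∈ 𝒳, IsNPresented R n U → ∀ i : ℕ, m + 1 ≤ i → ExtVanishes R (n + i) U M

/-- `M` has finite `n`-𝒳-injective dimension. -/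
noncomputable def HasFiniteNXInjDim (M : ModuleCat.{u} R) : Prop := ∃ m, NXInjDimLE R 𝒳 n m M

end Basic

section Tensor

variable (R : Type u) [Ring R]

/-- The defining relations of the tensor product `N ⊗_R U` of a right `R`-module `N`
with a left `R`-module `U`, inside `N ⊗_ℤ U`. -/
def tensorRel (N : Type u) [AddCommGroup N] [Module Rᵐᵒᵖ N]
    (U : Type u) [AddCommGroup U] [Module R U] : Submodule ℤ (TensorProduct ℤ N U) :=
  Submodule.span ℤ {x | ∃ (r : R) (a : N) (v : U),
    x = (MulOpposite.op r • a) ⊗ₜ[ℤ] v - a ⊗ₜ[ℤ] (r • v)}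

/-- The tensor product `N ⊗_R U` of a right `R`-module `N` with a left `R`-module `U`
over a (possibly noncommutative) ring `R`, as an abelian group. -/
abbrev RTensor (N : Type u) [AddCommGroup N] [Module Rᵐᵒᵖ N]
    (U : Type u) [AddCommGroup U] [Module R U] : Type u :=
  TensorProduct ℤ N U ⧸ tensorRel R N U

/-- Functoriality of `RTensor` in both variables. -/
noncomputable def rtmap {N N' : Type u} [AddCommGroup N] [Module Rᵐᵒᵖ N]
    [AddCommGroup N'] [Module Rᵐᵒᵖ N']
    {U U' : Type u} [AddCommGroup U] [Module R U] [AddCommGroup U'] [Module R U']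
    (g : N →ₗ[Rᵐᵒᵖ] N') (f : U →ₗ[R] U') :
    RTensor R N U →ₗ[ℤ] RTensor R N' U' :=
  Submodule.mapQ (tensorRel R N U) (tensorRel R N' U')
    (TensorProduct.map g.toAddMonoidHom.toIntLinearMap f.toAddMonoidHom.toIntLinearMap)
    (by
      rw [tensorRel, Submodule.span_le]
      rintro x ⟨r, a, v, rfl⟩
      simp only [SetLike.mem_coe, Submodule.mem_comap, map_sub, TensorProduct.map_tmul,
        AddMonoidHom.coe_toIntLinearMap, LinearMap.toAddMonoidHom_coe]
      apply Submodule.subset_span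
      exact ⟨r, g a, f v, by erw [map_sub, TensorProduct.map_tmul, TensorProduct.map_tmul]; simp [map_smul]⟩)

/-- A left `R`-module `M` is flat if `- ⊗_R M` preserves injections of right `R`-modules. -/
noncomputable def IsFlatModule (M : ModuleCat.{u} R) : Prop :=
  ∀ (A B : ModuleCat.{u} Rᵐᵒᵖ) (i : A →ₗ[Rᵐᵒᵖ] B), Function.Injective i →
    Function.Injective (rtmap R i (LinearMap.id (M := M)))

/-- A right `R`-module `N` is flat if `N ⊗_R -` preserves injections of left `R`-modules. -/
noncomputable def IsFlatRight (N : ModuleCat.{u} Rᵐᵒᵖ) : Prop :=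
  ∀ (A B : ModuleCat.{u} R) (i : A →ₗ[R] B), Function.Injective i →
    Function.Injective (rtmap R (LinearMap.id (M := N)) i)

/-- Flat dimension of a left `R`-module at most `m`. -/
noncomputable def FlatDimLE : ℕ → ModuleCat.{u} R → Prop
  | 0, K => IsFlatModule R K
  | m + 1, K => ∃ (P : ModuleCat.{u} R) (f : P →ₗ[R] K),
      IsFlatModule R P ∧ Function.Surjective f ∧
      FlatDimLE m (ModuleCat.of R (LinearMap.ker f))

/-- Finite flat dimension. -/
noncomputable def HasFiniteFlatDim (K : ModuleCat.{u} R) : Prop := ∃ m, FlatDimLE R m K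

variable (𝒳 : Set (ModuleCat.{u} R)) (n : ℕ)

/-- `Tor^R_k(N, U) = 0` for a right `R`-module `N` and a left `R`-module `U`, `k ≥ 1`:
by dimension shifting this says that for every `(k-1)`-st syzygy `K` of `U` and every
surjection `f : F → K` with `F` free, the induced map `N ⊗ ker f → N ⊗ F` is injective. -/
noncomputable def TorVanishes (k : ℕ) (N : ModuleCat.{u} Rᵐᵒᵖ) (U : ModuleCat.{u} R) : Prop :=
  ∀ (K : ModuleCat.{u} R), IsSyzygy R (k - 1) U K →
    ∀ (F : ModuleCat.{u} R) (f : F →ₗ[R] K), Module.Free R F → Function.Surjective f →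
      Function.Injective
        (rtmap R (LinearMap.id (M := N)) (LinearMap.ker f).subtype)

/-- `N` is an `n`-𝒳-flat right `R`-module: `Tor^R_n(N, U) = 0` for every
`n`-presented `U ∈ 𝒳`. -/
noncomputable def IsNXFlat (N : ModuleCat.{u} Rᵐᵒᵖ) : Prop :=
  ∀ U ∈ 𝒳, IsNPresented R n U → TorVanishes R n N U

/-- `N` has `n`-𝒳-flat dimension at most `m`:
`Tor^R_{n+i}(N, U) = 0` for all `i ≥ m + 1` and all `n`-presented `U ∈ 𝒳`. -/
noncomputable def NXFlatDimLE (m : ℕ) (N : ModuleCat.{u} Rᵐᵒᵖ) : Prop :=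
  ∀ U ∈ 𝒳, IsNPresented R n U → ∀ i : ℕ, m + 1 ≤ i → TorVanishes R (n + i) N U

/-- `N` has finite `n`-𝒳-flat dimension. -/
noncomputable def HasFiniteNXFlatDim (N : ModuleCat.{u} Rᵐᵒᵖ) : Prop := ∃ m, NXFlatDimLE R 𝒳 n m N

end Tensor

section Pure

variable (R : Type u) [Ring R] (𝒳 : Set (ModuleCat.{u} R)) (n : ℕ)

/-- A short exact sequence `0 → A → B → C → 0` of left `R`-modules (given by `i` and `p`)
is special 𝒳-pure if `0 → Hom(K, A) → Hom(K, B) → Hom(K, C) → 0` is exact for every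
special 𝒳-presented module `K`. -/
def IsSpecialXPure {A B C : Type u} [AddCommGroup A] [Module R A] [AddCommGroup B] [Module R B]
    [AddCommGroup C] [Module R C] (i : A →ₗ[R] B) (p : B →ₗ[R] C) : Prop :=
  ∀ K : ModuleCat.{u} R, IsSpecialPresented R 𝒳 n K →
    Function.Injective (fun g : K →ₗ[R] A => i.comp g) ∧
    Function.Exact (fun g : K →ₗ[R] A => i.comp g) (fun g : K →ₗ[R] B => p.comp g) ∧
    Function.Surjective (fun g : K →ₗ[R] B => p.comp g)

/-- A short exact sequence `0 → A → B → C → 0` of right `R`-modules (given by `i` and `p`)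
is special 𝒳-pure if `0 → A ⊗ K → B ⊗ K → C ⊗ K → 0` is exact for every special
𝒳-presented (left `R`-) module `K`. -/
noncomputable def IsSpecialXPureRight {A B C : Type u}
    [AddCommGroup A] [Module Rᵐᵒᵖ A] [AddCommGroup B] [Module Rᵐᵒᵖ B]
    [AddCommGroup C] [Module Rᵐᵒᵖ C] (i : A →ₗ[Rᵐᵒᵖ] B) (p : B →ₗ[Rᵐᵒᵖ] C) : Prop :=
  ∀ K : ModuleCat.{u} R, IsSpecialPresented R 𝒳 n K →
    Function.Injective (rtmap R i (LinearMap.id (M := K))) ∧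
    Function.Exact (rtmap R i (LinearMap.id (M := K))) (rtmap R p (LinearMap.id (M := K))) ∧
    Function.Surjective (rtmap R p (LinearMap.id (M := K)))

/-- `R` is self left `n`-𝒳-injective. -/
noncomputable def IsSelfNXInjective : Prop := IsNXInjective R 𝒳 n (ModuleCat.of R R)

end Pure

section Gorenstein

variable (R : Type u) [Ring R] (𝒳 : Set (ModuleCat.{u} R)) (n : ℕ)

/-- `G` is a Gorenstein `n`-𝒳-injective left `R`-module: there is an exact complex
`⋯ → A_1 → A_0 → A^0 → A^1 → ⋯` of `n`-𝒳-injective modules with `G = ker(A^0 → A^1)`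
which stays exact under `Hom_R(K, -)` for every special 𝒳-presented `K` of finite
projective dimension. -/
noncomputable def IsGorNXInjective (G : ModuleCat.{u} R) : Prop :=
  ∃ (C : ℤ → ModuleCat.{u} R) (d : ∀ i : ℤ, C i →ₗ[R] C (i - 1)),
    (∀ i, IsNXInjective R 𝒳 n (C i)) ∧
    (∀ i : ℤ, Function.Exact (d i) (d (i - 1))) ∧
    Nonempty (G ≃ₗ[R] LinearMap.ker (d 0)) ∧
    (∀ K : ModuleCat.{u} R, IsSpecialPresented R 𝒳 n K → HasFiniteProjDim R K →
      ∀ i : ℤ, Function.Exact (fun g : K →ₗ[R] C i => (d i).comp g)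
        (fun g : K →ₗ[R] C (i - 1) => (d (i - 1)).comp g))

/-- `G` is a Gorenstein `n`-𝒳-flat right `R`-module: there is an exact complex
`⋯ → F_1 → F_0 → F^0 → F^1 → ⋯` of `n`-𝒳-flat right modules with `G = ker(F^0 → F^1)`
which stays exact under `- ⊗_R K` for every special 𝒳-presented `K` of finite
flat dimension. -/
noncomputable def IsGorNXFlat (G : ModuleCat.{u} Rᵐᵒᵖ) : Prop :=
  ∃ (C : ℤ → ModuleCat.{u} Rᵐᵒᵖ) (d : ∀ i : ℤ, C i →ₗ[Rᵐᵒᵖ] C (i - 1)),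
    (∀ i, IsNXFlat R 𝒳 n (C i)) ∧
    (∀ i : ℤ, Function.Exact (d i) (d (i - 1))) ∧
    Nonempty (G ≃ₗ[Rᵐᵒᵖ] LinearMap.ker (d 0)) ∧
    (∀ K : ModuleCat.{u} R, IsSpecialPresented R 𝒳 n K → HasFiniteFlatDim R K →
      ∀ i : ℤ, Function.Exact (rtmap R (d i) (LinearMap.id (M := K)))
        (rtmap R (d (i - 1)) (LinearMap.id (M := K))))

end Gorenstein

section GorensteinAbsolute

/-- `G` is a Gorenstein injective module over `S`: there is an exact complex of injective
modules with `G = ker(E^0 → E^1)` which stays exact under `Hom(I, -)` for every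
injective module `I`. -/
noncomputable def IsGorensteinInjective (S : Type u) [Ring S] (G : ModuleCat.{u} S) : Prop :=
  ∃ (C : ℤ → ModuleCat.{u} S) (d : ∀ i : ℤ, C i →ₗ[S] C (i - 1)),
    (∀ i, Module.Injective S (C i)) ∧
    (∀ i : ℤ, Function.Exact (d i) (d (i - 1))) ∧
    Nonempty (G ≃ₗ[S] LinearMap.ker (d 0)) ∧
    (∀ I : ModuleCat.{u} S, Module.Injective S I →
      ∀ i : ℤ, Function.Exact (fun g : I →ₗ[S] C i => (d i).comp g)
        (fun g : I →ₗ[S] C (i - 1) => (d (i - 1)).comp g))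

/-- `G` is a Gorenstein projective module over `S`: there is an exact complex of projective
modules with `G = ker(P^0 → P^1)` which stays exact under `Hom(-, Q)` for every
projective module `Q`. -/
def IsGorensteinProjective (S : Type u) [Ring S] (G : ModuleCat.{u} S) : Prop :=
  ∃ (C : ℤ → ModuleCat.{u} S) (d : ∀ i : ℤ, C i →ₗ[S] C (i - 1)),
    (∀ i, Module.Projective S (C i)) ∧
    (∀ i : ℤ, Function.Exact (d i) (d (i - 1))) ∧
    Nonempty (G ≃ₗ[S] LinearMap.ker (d 0)) ∧
    (∀ Q : ModuleCat.{u} S, Module.Projective S Q →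
      ∀ i : ℤ, Function.Exact (fun g : C (i - 1 - 1) →ₗ[S] Q => g.comp (d (i - 1)))
        (fun g : C (i - 1) →ₗ[S] Q => g.comp (d i)))

variable (R : Type u) [Ring R]

/-- `G` is a Gorenstein flat left `R`-module: there is an exact complex of flat left modules
with `G = ker(F^0 → F^1)` which stays exact under `E ⊗_R -` for every injective right
`R`-module `E`. -/
noncomputable def IsGorensteinFlatLeft (G : ModuleCat.{u} R) : Prop :=
  ∃ (C : ℤ → ModuleCat.{u} R) (d : ∀ i : ℤ, C i →ₗ[R] C (i - 1)),
    (∀ i, IsFlatModule R (C i)) ∧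
    (∀ i : ℤ, Function.Exact (d i) (d (i - 1))) ∧
    Nonempty (G ≃ₗ[R] LinearMap.ker (d 0)) ∧
    (∀ E : ModuleCat.{u} Rᵐᵒᵖ, Module.Injective Rᵐᵒᵖ E →
      ∀ i : ℤ, Function.Exact (rtmap R (LinearMap.id (M := E)) (d i))
        (rtmap R (LinearMap.id (M := E)) (d (i - 1))))

/-- `G` is a Gorenstein flat right `R`-module: there is an exact complex of flat right modules
with `G = ker(F^0 → F^1)` which stays exact under `- ⊗_R E` for every injective left
`R`-module `E`. -/
noncomputable def IsGorensteinFlatRight (G : ModuleCat.{u} Rᵐᵒᵖ) : Prop :=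
  ∃ (C : ℤ → ModuleCat.{u} Rᵐᵒᵖ) (d : ∀ i : ℤ, C i →ₗ[Rᵐᵒᵖ] C (i - 1)),
    (∀ i, IsFlatRight R (C i)) ∧
    (∀ i : ℤ, Function.Exact (d i) (d (i - 1))) ∧
    Nonempty (G ≃ₗ[Rᵐᵒᵖ] LinearMap.ker (d 0)) ∧
    (∀ E : ModuleCat.{u} R, Module.Injective R E →
      ∀ i : ℤ, Function.Exact (rtmap R (d i) (LinearMap.id (M := E)))
        (rtmap R (d (i - 1)) (LinearMap.id (M := E))))

end GorensteinAbsolute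

/-! A direct summand of an `n`-𝒳-injective module is `n`-𝒳-injective, because `Ext^n(U, -)`
preserves split monomorphisms. Conversely, splicing the finite free presentations of an
`n`-presented `U` gives a projective resolution `P` of `U` whose term `P_n` is finitely generated.
A degree-`n` cocycle `P_n → ⊕ A_i` then takes values in finitely many summands, so the
coboundaries bounding its components add up to a coboundary bounding it. -/

universe v

namespace CategoryTheory

variable {C : Type*} [Category.{v} C] [Abelian C]

namespace ProjectiveResolution

variable {Z X : C} (Q : ProjectiveResolution Z) (f : Z ⟶ X)

-- `Q.π.f 0` lands in `((single₀ C).obj Z).X 0`, which is `Z` only up to a non-reducible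
-- defeq; composing with `singleObjXSelf` keeps the rewriting lemmas applicable.
noncomputable def augmentComplex : ChainComplex C ℕ :=
  Q.complex.augment
    (Q.π.f 0 ≫ (HomologicalComplex.singleObjXSelf (ComplexShape.down ℕ) 0 Z).hom ≫ f)
    (by rw [Q.complex_d_comp_π_f_zero_assoc, Limits.zero_comp])

lemma augmentComplex_exactAt_succ [Mono f] (n : ℕ) : (Q.augmentComplex f).ExactAt (n + 1) := by
  rw [HomologicalComplex.exactAt_iff' _ (n + 2) (n + 1) n (by simp) (by simp)]
  match n with
  | 0 =>
    let φ : ShortComplex.mk _ _ Q.complex_d_comp_π_f_zero ⟶ (Q.augmentComplex f).sc' 2 1 0 :=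
      ShortComplex.homMk (𝟙 _) (𝟙 _)
        ((HomologicalComplex.singleObjXSelf (ComplexShape.down ℕ) 0 Z).hom ≫ f)
        (by erw [Category.id_comp, Category.comp_id]; rfl) (by erw [Category.id_comp]; rfl)
    have : Epi φ.τ₁ := inferInstanceAs (Epi (𝟙 _))
    have : IsIso φ.τ₂ := inferInstanceAs (IsIso (𝟙 _))
    have : Mono φ.τ₃ := inferInstanceAs (Mono (_ ≫ f))
    exact (ShortComplex.exact_iff_of_epi_of_isIso_of_mono φ).1 Q.exact₀
  | n + 1 => exact Q.exact_succ n

end ProjectiveResolution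

namespace ShortComplex.ShortExact

variable {S : ShortComplex C}

lemma augmentation_comp_g (Q : ProjectiveResolution S.X₁) :
    (Q.π.f 0 ≫ (HomologicalComplex.singleObjXSelf (ComplexShape.down ℕ) 0 S.X₁).hom ≫ S.f) ≫ S.g =
      0 := by
  rw [Category.assoc, Category.assoc, S.zero, Limits.comp_zero, Limits.comp_zero]

lemma exact_augmentation (hS : S.ShortExact) (Q : ProjectiveResolution S.X₁) :
    (ShortComplex.mk _ _ (augmentation_comp_g Q)).Exact := by
  let φ : ShortComplex.mk _ _ (augmentation_comp_g Q) ⟶ S :=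
    ShortComplex.homMk
      (Q.π.f 0 ≫ (HomologicalComplex.singleObjXSelf (ComplexShape.down ℕ) 0 S.X₁).hom) (𝟙 _) (𝟙 _)
      (by rw [Category.comp_id]; exact Category.assoc _ _ _) (by simp)
  have : Epi φ.τ₁ := inferInstanceAs (Epi (Q.π.f 0 ≫ _))
  have : IsIso φ.τ₂ := inferInstanceAs (IsIso (𝟙 _))
  have : Mono φ.τ₃ := inferInstanceAs (Mono (𝟙 _))
  exact (ShortComplex.exact_iff_of_epi_of_isIso_of_mono φ).2 hS.exact

noncomputable def projectiveResolution (hS : S.ShortExact) [Projective S.X₂]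
    (Q : ProjectiveResolution S.X₁) : ProjectiveResolution S.X₃ where
  complex := Q.augmentComplex S.f
  projective
    | 0 => inferInstanceAs (Projective S.X₂)
    | n + 1 => inferInstanceAs (Projective (Q.complex.X n))
  π := (ChainComplex.toSingle₀Equiv _ _).symm ⟨S.g, augmentation_comp_g Q⟩
  quasiIso := ⟨fun n => by
    cases n with
    | zero =>
      rw [ChainComplex.quasiIsoAt₀_iff, ShortComplex.quasiIso_iff_of_zeros' _ rfl rfl rfl]
      refine (ShortComplex.exact_and_epi_g_iff_of_iso
        (S₂ := ShortComplex.mk _ _ (augmentation_comp_g Q)) ?_).2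
          ⟨hS.exact_augmentation Q, hS.epi_g⟩
      refine ShortComplex.isoMk (Iso.refl _) (Iso.refl _) (Iso.refl _) ?_ ?_
      · exact (Category.id_comp _).trans (Category.comp_id _).symm
      · exact (Category.id_comp _).trans
          ((ChainComplex.toSingle₀Equiv_symm_apply_f_zero (C := Q.augmentComplex S.f) S.g
            _).symm.trans (Category.comp_id _).symm)
    | succ n =>
      rw [quasiIsoAt_iff_exactAt']
      · have := hS.mono_f
        exact Q.augmentComplex_exactAt_succ S.f n
      · exact ChainComplex.exactAt_succ_single_obj _ _⟩

end ShortComplex.ShortExact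

end CategoryTheory

open CategoryTheory

section DirectSum

variable {R : Type*} [Ring R] {I : Type*} {A : I → Type*} [∀ i, AddCommGroup (A i)]
  [∀ i, Module R (A i)] {X Y : Type*} [AddCommGroup X] [Module R X] [AddCommGroup Y] [Module R Y]

lemma DirectSum.exists_finset_component_comp_eq_zero [Module.Finite R X] (g : X →ₗ[R] ⨁ i, A i) :
    ∃ S : Finset I, ∀ i ∉ S, component R I A i ∘ₗ g = 0 := by
  classical
  obtain ⟨s, hs⟩ := Module.finite_def.mp ‹_›
  refine ⟨s.sup fun x => (g x).support, fun i hi => LinearMap.ext_on hs fun x hx => ?_⟩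
  exact DFinsupp.notMem_support_iff.mp fun h => hi (Finset.mem_sup.mpr ⟨x, hx, h⟩)

lemma DirectSum.exists_comp_eq_of_forall_component [Module.Finite R X] (d : X →ₗ[R] Y)
    (g : X →ₗ[R] ⨁ i, A i) (h : ∀ i, ∃ k : Y →ₗ[R] A i, k ∘ₗ d = component R I A i ∘ₗ g) :
    ∃ k : Y →ₗ[R] ⨁ i, A i, k ∘ₗ d = g := by
  classical
  choose k hk using h
  obtain ⟨S, hS⟩ := exists_finset_component_comp_eq_zero g
  refine ⟨∑ i ∈ S, lof R I A i ∘ₗ k i, LinearMap.ext fun x => ext_component R fun j => ?_⟩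
  by_cases hj : j ∈ S
  · simpa [component.of, hj] using LinearMap.congr_fun (hk j) x
  · simpa [component.of, hj] using (LinearMap.congr_fun (hS j hj) x).symm

end DirectSum

instance ModuleCat.isSplitMono_ofHom_lof {R : Type*} [Ring R] {I : Type*} [DecidableEq I]
    (A : I → ModuleCat R) (i : I) :
    IsSplitMono (ModuleCat.ofHom (DirectSum.lof R I (fun i => A i) i)) :=
  .mk' ⟨ModuleCat.ofHom (DirectSum.component R I (fun i => A i) i), by ext; simp⟩

section ModuleCat

variable {R : Type u} [Ring R]

theorem IsNPresented.exists_projectiveResolution_finite_X {n : ℕ} {U : ModuleCat.{u} R}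
    (hU : IsNPresented R n U) : ∃ P : ProjectiveResolution U, Module.Finite R (P.complex.X n) := by
  induction n generalizing U with
  | zero =>
    have : Module.Finite R U := hU
    obtain ⟨k, f, hf⟩ := Module.Finite.exists_fin' R U
    exact ⟨(LinearMap.shortExact_shortComplexKer hf).projectiveResolution
      (ProjectiveResolution.of _), inferInstanceAs (Module.Finite R (Fin k → R))⟩
  | succ n ih =>
    obtain ⟨F, f, _, _, hf, hker⟩ := hU
    obtain ⟨Q, hQ⟩ := ih hker
    exact ⟨(LinearMap.shortExact_shortComplexKer hf).projectiveResolution Q, hQ⟩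

-- For `n = 0` the truncation `n - 1 = 0` makes `P.complex.d 0 0 = 0`: the condition reads `g = 0`.
lemma CategoryTheory.ProjectiveResolution.subsingleton_ext_iff {U : ModuleCat.{u} R}
    (P : ProjectiveResolution U) (n : ℕ) (M : ModuleCat.{u} R) :
    Subsingleton (((Ext ℤ (ModuleCat.{u} R) n).obj (Opposite.op U)).obj M) ↔
      ∀ g : P.complex.X n ⟶ M, P.complex.d (n + 1) n ≫ g = 0 →
        ∃ h : P.complex.X (n - 1) ⟶ M, P.complex.d n (n - 1) ≫ h = g := by
  have hprev : (ComplexShape.up ℕ).prev n = n - 1 := by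
    cases n
    · exact CochainComplex.prev_nat_zero
    · exact CochainComplex.prev_nat_succ _
  rw [← ModuleCat.isZero_iff_subsingleton, (P.isoExt n M).isZero_iff,
    ← HomologicalComplex.exactAt_iff_isZero_homology,
    HomologicalComplex.exactAt_iff' _ (n - 1) n (n + 1) hprev (by simp),
    ShortComplex.moduleCat_exact_iff]
  rfl

end ModuleCat

namespace ExtVanishes

variable {R : Type u} [Ring R] {k : ℕ} {U : ModuleCat.{u} R}

lemma of_isSplitMono {M N : ModuleCat.{u} R} (f : M ⟶ N) [IsSplitMono f]
    (h : ExtVanishes R k U N) : ExtVanishes R k U M := by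
  unfold ExtVanishes at h ⊢
  rw [← ModuleCat.isZero_iff_subsingleton] at h ⊢
  exact h.of_mono (((Ext ℤ (ModuleCat.{u} R) k).obj (Opposite.op U)).map f)

lemma directSum (hU : IsNPresented R k U) {I : Type u} (A : I → ModuleCat.{u} R)
    (hA : ∀ i, ExtVanishes R k U (A i)) : ExtVanishes R k U (ModuleCat.of R (⨁ i, A i)) := by
  obtain ⟨P, hP⟩ := hU.exists_projectiveResolution_finite_X
  refine (P.subsingleton_ext_iff k _).2 fun g hg => ?_
  have hcomp : ∀ i, ∃ c : P.complex.X (k - 1) →ₗ[R] A i,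
      c ∘ₗ (P.complex.d k (k - 1)).hom = DirectSum.component R I (fun i => A i) i ∘ₗ g.hom := by
    intro i
    obtain ⟨c, hc⟩ := (P.subsingleton_ext_iff k (A i)).1 (hA i)
      (g ≫ ModuleCat.ofHom (DirectSum.component R I (fun i => A i) i))
      (by rw [← Category.assoc, hg, Limits.zero_comp])
    exact ⟨c.hom, congrArg ModuleCat.Hom.hom hc⟩
  obtain ⟨c, hc⟩ := DirectSum.exists_comp_eq_of_forall_component _ g.hom hcomp
  exact ⟨ModuleCat.ofHom c, ModuleCat.hom_ext hc⟩

end ExtVanishes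

theorem statement_4_general (R : Type u) [Ring R] (𝒳 : Set (ModuleCat.{u} R)) (n : ℕ)
    (I : Type u) (A : I → ModuleCat.{u} R) :
    IsNXInjective R 𝒳 n (ModuleCat.of R (⨁ i, ↥(A i))) ↔
      ∀ i, IsNXInjective R 𝒳 n (A i) := by
  classical
  exact ⟨fun h i U hU hUn => ExtVanishes.of_isSplitMono
      (ModuleCat.ofHom (DirectSum.lof R I (fun i => A i) i)) (h U hU hUn),
    fun h U hU hUn => ExtVanishes.directSum hUn A fun i => h i U hU hUn⟩

/-- over a left `n`-𝒳-coherent ring, a direct sum `⊕_{i ∈ I} A_i` is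
`n`-𝒳-injective iff every `A_i` is `n`-𝒳-injective. -/
theorem statement_4 (R : Type u) [Ring R] (𝒳 : Set (ModuleCat.{u} R)) (n : ℕ) (hn : 1 ≤ n)
    (hcoh : IsNXCoherent R 𝒳 n) (I : Type u) (A : I → ModuleCat.{u} R) :
    IsNXInjective R 𝒳 n (ModuleCat.of R (⨁ i, ↥(A i))) ↔
      ∀ i, IsNXInjective R 𝒳 n (A i) :=
  statement_4_general R 𝒳 n I A
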